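/- arXiv:1708.04112 — 3 statements merged into one kernel-verified Lean document; each statement's English description precedes it below -/
import Mathlib

section
/- Let ε > 0 and let a, b be real numbers with a ≥ 0 and b ≥ 0. Then (1/ε + √(1 + 1/ε²))⁻¹ · (a + b) ≤ |(1 − iε)·a − b| ≤ √(1 + ε²) · (a + b), where |·| denotes the modulus of a complex number and i the imaginary unit. (This is the pointwise content of Lemma 1: for the analytically continued metric g^ε = (1−iε)β dt² − g_t on a globally hyperbolic analytic spacetime and the Riemannian metric g^R = β dt² + g_t, one has g^ε(ξ,ξ) = (1−iε)a − b and g^R(ξ,ξ) = a + b with a = β(dt(ξ))² ≥ 0 and b = g_t(ξ,ξ) ≥ 0, so this inequality states Ĉ(ε) g^R(ξ,ξ) ≤ |g^ε(ξ,ξ)| ≤ Č(ε) g^R(ξ,ξ) with Ĉ(ε) = (1/ε + √(1+1/ε²))⁻¹ and Č(ε) = √(1+ε²).) -/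
/-!
Write `z = (1 - iε)a - b`. The upper bound is the triangle inequality together with
`|1 - iε| = √(1 + ε²)`. For the lower bound, `|Im z| = εa` gives `a ≤ |z| / ε`, and since the
distance from the real point `b` to the line `ℝ(1 - iε)` is `εb / √(1 + ε²)`, also
`b ≤ √(1 + 1/ε²) |z|`; adding the two gives `(a + b) ≤ Ĉ(ε)⁻¹ |z|`.
-/

open Complex

lemma Complex.norm_one_sub_ofReal_mul_I (ε : ℝ) : ‖1 - (ε : ℂ) * I‖ = √(1 + ε ^ 2) := by
  simp [norm_eq_sqrt_sq_add_sq]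

lemma Complex.sq_norm_one_sub_ofReal_mul_I_mul_sub (ε a b : ℝ) :
    ‖(1 - (ε : ℂ) * I) * a - b‖ ^ 2 = (a - b) ^ 2 + (ε * a) ^ 2 := by
  rw [Complex.sq_norm, normSq_apply]
  simp only [sub_re, sub_im, mul_re, mul_im, one_re, one_im, ofReal_re, ofReal_im, I_re, I_im]
  ring

lemma Complex.mul_le_norm_one_sub_ofReal_mul_I_mul_sub (ε a b : ℝ) :
    ε * a ≤ ‖(1 - (ε : ℂ) * I) * a - b‖ :=
  abs_le_of_sq_le_sq' (by rw [sq_norm_one_sub_ofReal_mul_I_mul_sub]; nlinarith)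
    (norm_nonneg _) |>.2

lemma Complex.mul_le_sqrt_mul_norm_one_sub_ofReal_mul_I_mul_sub (ε a b : ℝ) :
    ε * b ≤ √(1 + ε ^ 2) * ‖(1 - (ε : ℂ) * I) * a - b‖ := by
  rw [← Real.sqrt_sq (norm_nonneg _), ← Real.sqrt_mul (by positivity),
    sq_norm_one_sub_ofReal_mul_I_mul_sub]
  -- `(1 + ε²)((a - b)² + (εa)²) - (εb)² = ((1 + ε²)a - b)²`
  exact (le_abs_self _).trans (Real.abs_le_sqrt (by nlinarith [sq_nonneg ((1 + ε ^ 2) * a - b)]))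

lemma Complex.norm_one_sub_ofReal_mul_I_mul_sub_le (ε : ℝ) {a b : ℝ} (ha : 0 ≤ a) (hb : 0 ≤ b) :
    ‖(1 - (ε : ℂ) * I) * a - b‖ ≤ √(1 + ε ^ 2) * (a + b) := by
  have h_one_le : 1 ≤ √(1 + ε ^ 2) := Real.one_le_sqrt.2 (by nlinarith)
  calc ‖(1 - (ε : ℂ) * I) * a - b‖ ≤ ‖1 - (ε : ℂ) * I‖ * ‖(a : ℂ)‖ + ‖(b : ℂ)‖ :=
        (norm_sub_le _ _).trans_eq (by rw [norm_mul])
    _ = √(1 + ε ^ 2) * a + b := by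
        rw [norm_one_sub_ofReal_mul_I, norm_real, norm_real, Real.norm_of_nonneg ha,
          Real.norm_of_nonneg hb]
    _ ≤ √(1 + ε ^ 2) * (a + b) := by nlinarith

lemma Real.one_div_add_sqrt_one_add_one_div_sq {ε : ℝ} (hε : 0 < ε) :
    1 / ε + √(1 + 1 / ε ^ 2) = (1 + √(1 + ε ^ 2)) / ε := by
  have h : 1 + 1 / ε ^ 2 = (1 + ε ^ 2) / ε ^ 2 := by field_simp; ring
  rw [h, Real.sqrt_div' _ (sq_nonneg ε), Real.sqrt_sq hε.le, add_div]

lemma Complex.le_norm_one_sub_ofReal_mul_I_mul_sub {ε : ℝ} (hε : 0 < ε) (a b : ℝ) :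
    (1 / ε + √(1 + 1 / ε ^ 2))⁻¹ * (a + b) ≤ ‖(1 - (ε : ℂ) * I) * a - b‖ := by
  rw [Real.one_div_add_sqrt_one_add_one_div_sq hε, inv_div, div_mul_eq_mul_div,
    div_le_iff₀ (by positivity)]
  linarith [mul_le_norm_one_sub_ofReal_mul_I_mul_sub ε a b,
    mul_le_sqrt_mul_norm_one_sub_ofReal_mul_I_mul_sub ε a b]

/-- pointwise content of Lemma 1, metric estimate:
for `ε > 0` and nonnegative reals `a, b`,
`Ĉ(ε)·(a+b) ≤ |(1−iε)a − b| ≤ Č(ε)·(a+b)` with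
`Ĉ(ε) = (1/ε + √(1+1/ε²))⁻¹` and `Č(ε) = √(1+ε²)`. -/
theorem metric_estimate (ε a b : ℝ) (hε : 0 < ε) (ha : 0 ≤ a) (hb : 0 ≤ b) :
    (1 / ε + Real.sqrt (1 + 1 / ε ^ 2))⁻¹ * (a + b) ≤
      ‖(1 - (ε : ℂ) * Complex.I) * (a : ℂ) - (b : ℂ)‖ ∧
    ‖(1 - (ε : ℂ) * Complex.I) * (a : ℂ) - (b : ℂ)‖ ≤
      Real.sqrt (1 + ε ^ 2) * (a + b) :=
  ⟨le_norm_one_sub_ofReal_mul_I_mul_sub hε a b, norm_one_sub_ofReal_mul_I_mul_sub_le ε ha hb⟩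
end

section
/- Let ν ∈ ℕ, ε > 0, and x = (x₀, 𝐱) ∈ ℝ × ℝ³ with x ≠ 0. Set z² = (1−iε)x₀² − ‖𝐱‖², x_E = √(x₀² + ‖𝐱‖²), and x̂_E = (1/ε + √(1 + 1/ε²))^{−1/2} · x_E. Then K_ν(|√(−z²)|) ≤ K_ν(x̂_E), where K_ν is the modified Bessel function of the second kind given by K_ν(s) = ∫₀^∞ exp(−s cosh t) cosh(ν t) dt for s > 0, and √(·) denotes the principal branch of the complex square root. -/
/-- The modified Bessel function of the second kind for real argument,
`K_ν(s) = ∫₀^∞ exp(−s cosh t) cosh(νt) dt`. -/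
noncomputable def besselK (ν : ℕ) (s : ℝ) : ℝ :=
  ∫ t in Set.Ioi (0 : ℝ), Real.exp (-s * Real.cosh t) * Real.cosh (ν * t)

/-!
`K_ν` is decreasing on `(0, ∞)`, since its integrand is decreasing in `s` and integrable for
`s > 0`. So it suffices to compare the arguments: with `a = ‖𝐱‖²`, `b = x₀²` and
`M = 1/ε + √(1 + 1/ε²)`, one has `−z² = (a − b) + iεb`, hence `|√(−z²)|² = |(a − b) + iεb|`,
while `x̂_E² = (a + b)/M`. The inequality `a + b ≤ M |(a − b) + iεb|` follows from
`(εM)² = (1 + √(1 + ε²))² ≥ 4 + ε²` and a sum-of-squares identity.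
-/

open Real MeasureTheory Set

lemma sq_div_four_le_cosh {t : ℝ} (ht : 0 ≤ t) : t ^ 2 / 4 ≤ cosh t := by
  rw [cosh_eq]
  linarith [quadratic_le_exp_of_nonneg ht, exp_pos (-t)]

lemma cosh_le_exp_of_nonneg {t : ℝ} (ht : 0 ≤ t) : cosh t ≤ exp t := by
  rw [cosh_eq]
  linarith [exp_le_exp.2 (show -t ≤ t by linarith)]

lemma besselK_integrand_le (ν : ℕ) {s t : ℝ} (hs : 0 < s) (ht : 0 ≤ t) :
    exp (-s * cosh t) * cosh (ν * t) ≤ exp ((ν + 1) ^ 2 / s) * exp (-t) := by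
  calc exp (-s * cosh t) * cosh (ν * t) ≤ exp (-s * (t ^ 2 / 4)) * exp (ν * t) := by
        refine mul_le_mul (exp_le_exp.2 ?_) (cosh_le_exp_of_nonneg (by positivity))
          (cosh_pos _).le (exp_pos _).le
        nlinarith [sq_div_four_le_cosh ht]
    _ ≤ exp ((ν + 1) ^ 2 / s) * exp (-t) := by
        rw [← exp_add, ← exp_add, exp_le_exp]
        have hsq : 0 ≤ (s * t - 2 * (ν + 1)) ^ 2 / (4 * s) := by positivity
        have hexpand : (s * t - 2 * (ν + 1)) ^ 2 / (4 * s) =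
            s * t ^ 2 / 4 - (ν + 1) * t + (ν + 1) ^ 2 / s := by
          field_simp
          ring
        linarith

lemma integrableOn_besselK_integrand (ν : ℕ) {s : ℝ} (hs : 0 < s) :
    IntegrableOn (fun t => exp (-s * cosh t) * cosh (ν * t)) (Ioi 0) := by
  refine ((integrableOn_exp_neg_Ioi 0).const_mul (exp ((ν + 1) ^ 2 / s))).mono'
    (by fun_prop) (ae_restrict_of_forall_mem measurableSet_Ioi fun t ht => ?_)
  rw [Real.norm_of_nonneg (by positivity)]
  exact besselK_integrand_le ν hs (le_of_lt ht)

lemma besselK_antitoneOn (ν : ℕ) : AntitoneOn (besselK ν) (Ioi 0) := by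
  intro b hb a _ hba
  refine integral_mono_of_nonneg (.of_forall fun t => by positivity)
    (integrableOn_besselK_integrand ν hb) (.of_forall fun t => ?_)
  refine mul_le_mul_of_nonneg_right (exp_le_exp.2 ?_) (cosh_pos _).le
  nlinarith [cosh_pos t]

lemma sq_add_four_le_sq_mul_inv_add_sqrt {ε : ℝ} (hε : 0 < ε) :
    ε ^ 2 + 4 ≤ (ε * (1 / ε + √(1 + 1 / ε ^ 2))) ^ 2 := by
  have hmul : ε * (1 / ε + √(1 + 1 / ε ^ 2)) = 1 + √(ε ^ 2 + 1) := by
    rw [mul_add, mul_one_div_cancel hε.ne', ← sqrt_sq hε.le, ← sqrt_mul (sq_nonneg ε),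
      sqrt_sq hε.le]
    field_simp
  have hone : 1 ≤ √(ε ^ 2 + 1) := one_le_sqrt.2 (by nlinarith)
  rw [hmul]
  nlinarith [sq_sqrt (show 0 ≤ ε ^ 2 + 1 by positivity)]

lemma add_le_mul_sqrt_sub_sq_add_sq {ε : ℝ} (hε : 0 < ε) (a b : ℝ) :
    a + b ≤ (1 / ε + √(1 + 1 / ε ^ 2)) * √((a - b) ^ 2 + (ε * b) ^ 2) := by
  set M := 1 / ε + √(1 + 1 / ε ^ 2)
  have hM : 0 ≤ M := by positivity
  -- `(ε² + 4)((a - b)² + (εb)²) - ε²(a + b)² = (2a - (2 + ε²)b)²`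
  have hsq : ε ^ 2 * (a + b) ^ 2 ≤ (ε ^ 2 + 4) * ((a - b) ^ 2 + (ε * b) ^ 2) := by
    nlinarith [sq_nonneg (2 * a - (2 + ε ^ 2) * b)]
  have hεM := mul_le_mul_of_nonneg_right (sq_add_four_le_sq_mul_inv_add_sqrt hε)
    (by positivity : 0 ≤ (a - b) ^ 2 + (ε * b) ^ 2)
  rw [← sqrt_sq hM, ← sqrt_mul (sq_nonneg M)]
  refine le_sqrt_of_sq_le (le_of_mul_le_mul_left ?_ (by positivity : 0 < ε ^ 2))
  nlinarith

lemma Complex.norm_cpow_one_div_two (w : ℂ) : ‖w ^ ((1 : ℂ) / 2)‖ = √‖w‖ := by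
  rw [show (1 : ℂ) / 2 = ((1 / 2 : ℝ) : ℂ) by norm_num, Complex.norm_cpow_real, sqrt_eq_rpow]

/-- for `ν ∈ ℕ`, `ε > 0` and `x = (x₀, 𝐱) ∈ ℝ × ℝ³` with `x ≠ 0`,
setting `z² = (1−iε)x₀² − ‖𝐱‖²`, `x_E = √(x₀² + ‖𝐱‖²)` and
`x̂_E = (1/ε + √(1+1/ε²))^{−1/2}·x_E`, one has `K_ν(|√(−z²)|) ≤ K_ν(x̂_E)`,
where `√` is the principal branch. -/
theorem besselK_lower_arg_bound (ν : ℕ) (ε : ℝ) (hε : 0 < ε)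
    (x₀ : ℝ) (x : EuclideanSpace ℝ (Fin 3)) (hx : x₀ ≠ 0 ∨ x ≠ 0) :
    besselK ν (‖((-((1 - (ε : ℂ) * Complex.I) * (x₀ : ℂ) ^ 2 - (‖x‖ : ℂ) ^ 2)) ^ ((1 : ℂ) / 2))‖) ≤
      besselK ν ((1 / ε + Real.sqrt (1 + 1 / ε ^ 2)) ^ (-(1 : ℝ) / 2) *
        Real.sqrt (x₀ ^ 2 + ‖x‖ ^ 2)) := by
  set M := 1 / ε + √(1 + 1 / ε ^ 2)
  have hM : 0 < M := by positivity
  have hpos : 0 < ‖x‖ ^ 2 + x₀ ^ 2 := by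
    rcases hx with hx₀ | hx
    · positivity
    · have := norm_pos_iff.2 hx
      positivity
  have hlhs : ‖(-((1 - (ε : ℂ) * Complex.I) * (x₀ : ℂ) ^ 2 - (‖x‖ : ℂ) ^ 2)) ^ ((1 : ℂ) / 2)‖ =
      √√((‖x‖ ^ 2 - x₀ ^ 2) ^ 2 + (ε * x₀ ^ 2) ^ 2) := by
    have hw : -((1 - (ε : ℂ) * Complex.I) * (x₀ : ℂ) ^ 2 - (‖x‖ : ℂ) ^ 2) =
        ((‖x‖ ^ 2 - x₀ ^ 2 : ℝ) : ℂ) + ((ε * x₀ ^ 2 : ℝ) : ℂ) * Complex.I := by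
      push_cast
      ring
    rw [hw, Complex.norm_cpow_one_div_two, Complex.norm_add_mul_I]
  have hrhs : M ^ (-(1 : ℝ) / 2) * √(x₀ ^ 2 + ‖x‖ ^ 2) = √((‖x‖ ^ 2 + x₀ ^ 2) / M) := by
    rw [neg_div, rpow_neg hM.le, ← sqrt_eq_rpow, sqrt_div' _ hM.le, add_comm]
    ring
  have hle : √((‖x‖ ^ 2 + x₀ ^ 2) / M) ≤ √√((‖x‖ ^ 2 - x₀ ^ 2) ^ 2 + (ε * x₀ ^ 2) ^ 2) := by
    refine sqrt_le_sqrt ((div_le_iff₀ hM).2 ?_)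
    rw [mul_comm]
    exact add_le_mul_sqrt_sub_sq_add_sq hε _ _
  have hrhs_pos : 0 < √((‖x‖ ^ 2 + x₀ ^ 2) / M) := sqrt_pos.2 (div_pos hpos hM)
  rw [hlhs, hrhs]
  exact besselK_antitoneOn ν hrhs_pos (hrhs_pos.trans_le hle) hle
end

section
/- Let d, d' ∈ ℕ with d' ≤ d, let f : ℝⁿ → ℝ be of class C^d, and let a, a' ∈ ℝⁿ. Denote by t^d_a the Taylor operator assigning to a C^d function its Taylor polynomial of order d about a. Then (1 − t^d_a)((1 − t^{d'}_{a'}) f) = (1 − t^d_a) f as functions on ℝⁿ; that is, for every x ∈ ℝⁿ, (f(x) − (t^{d'}_{a'} f)(x)) − t^d_a(f − t^{d'}_{a'} f)(x) = f(x) − (t^d_a f)(x). In other words, an additional lower-order Taylor subtraction about a (possibly different) point a' does not change the order-d Taylor remainder about a; it only amounts to a reshuffling of the subtracted polynomial terms. -/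
/-- The Taylor operator of the configuration-space BPHZ scheme: the Taylor polynomial
of order `d` of `f : ℝⁿ → ℝ` about `a`, `(t^d_a f)(x) = Σ_{k≤d} (1/k!) D^k f(a)[(x−a),…]`,
with `D^k f(a)` the `k`-th Fréchet derivative of `f` at `a`. -/
noncomputable def taylorOp {n : ℕ} (d : ℕ) (f : EuclideanSpace ℝ (Fin n) → ℝ)
    (a x : EuclideanSpace ℝ (Fin n)) : ℝ :=
  ∑ k ∈ Finset.range (d + 1),
    ((k.factorial : ℝ))⁻¹ * iteratedFDeriv ℝ k f a (fun _ => x - a)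

/-!
The operator `t^d_a` is linear on `C^d` functions, and `P := t^{d'}_{a'} f` is a polynomial of
degree `≤ d' ≤ d`, so `t^d_a P = P` and `(1 - t^d_a)(f - P) = (1 - t^d_a) f`.

The reproduction `t^d_a P = P` is read off from power series: `P` has a finite power series
about `a'` of order `d' + 1` and infinite radius; moving its origin to `a` keeps the order bound,
and the coefficients of a power series about `a` are the iterated derivatives at `a` over `k!`.
-/

open Nat

namespace HasFiniteFPowerSeriesOnBall

variable {𝕜 E F : Type*} [NontriviallyNormedField 𝕜]
  [NormedAddCommGroup E] [NormedSpace 𝕜 E] [NormedAddCommGroup F] [NormedSpace 𝕜 F]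
  {f : E → F} {p : FormalMultilinearSeries 𝕜 E F} {x : E} {m : ℕ}

theorem exists_recentered_of_top (hf : HasFiniteFPowerSeriesOnBall f p x m ⊤) (a : E) :
    ∃ q : FormalMultilinearSeries 𝕜 E F, HasFiniteFPowerSeriesOnBall f q a m ⊤ := by
  have h := hf.changeOrigin (y := a - x) ENNReal.coe_lt_top
  rw [add_sub_cancel, ENNReal.top_sub_coe] at h
  exact ⟨_, h⟩

theorem contDiff (hf : HasFiniteFPowerSeriesOnBall f p x m ⊤) {n : WithTop ℕ∞} :
    ContDiff 𝕜 n f := by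
  have h := hf.cpolynomialOn
  rw [Metric.eball_top] at h
  exact h.analyticOnNhd.contDiff

theorem sum_iteratedFDeriv_eq [CharZero 𝕜] [CompleteSpace F]
    (hf : HasFiniteFPowerSeriesOnBall f p x m ⊤) {d : ℕ} (hm : m ≤ d + 1) (a y : E) :
    ∑ k ∈ Finset.range (d + 1), (k ! : 𝕜)⁻¹ • iteratedFDeriv 𝕜 k f a (fun _ => y - a) = f y := by
  obtain ⟨q, hq⟩ := hf.exists_recentered_of_top a
  rw [hq.eq_partialSum' y (by simp) (d + 1) hm]
  refine Finset.sum_congr rfl fun k _ => ?_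
  rw [← hq.factorial_smul, ← Nat.cast_smul_eq_nsmul 𝕜,
    inv_smul_smul₀ (Nat.cast_ne_zero.mpr k.factorial_ne_zero)]

end HasFiniteFPowerSeriesOnBall

section TaylorOp

variable {n : ℕ}

noncomputable def taylorOpSeries (d : ℕ) (f : EuclideanSpace ℝ (Fin n) → ℝ)
    (a : EuclideanSpace ℝ (Fin n)) : FormalMultilinearSeries ℝ (EuclideanSpace ℝ (Fin n)) ℝ :=
  fun k => if k < d + 1 then (k ! : ℝ)⁻¹ • iteratedFDeriv ℝ k f a else 0

theorem hasFiniteFPowerSeriesOnBall_taylorOp (d : ℕ) (f : EuclideanSpace ℝ (Fin n) → ℝ)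
    (a : EuclideanSpace ℝ (Fin n)) :
    HasFiniteFPowerSeriesOnBall (taylorOp d f a) (taylorOpSeries d f a) a (d + 1) ⊤ := by
  refine .mk' (fun k hk => if_neg hk.not_gt) ENNReal.zero_lt_top fun y _ => ?_
  refine Finset.sum_congr rfl fun k hk => ?_
  rw [taylorOpSeries, if_pos (Finset.mem_range.mp hk), add_sub_cancel_left]
  rfl

theorem taylorOp_taylorOp_of_le {d d' : ℕ} (hdd : d' ≤ d) (f : EuclideanSpace ℝ (Fin n) → ℝ)
    (a a' x : EuclideanSpace ℝ (Fin n)) :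
    taylorOp d (taylorOp d' f a') a x = taylorOp d' f a' x :=
  (hasFiniteFPowerSeriesOnBall_taylorOp d' f a').sum_iteratedFDeriv_eq (by omega) a x

theorem taylorOp_sub {d : ℕ} {f g : EuclideanSpace ℝ (Fin n) → ℝ} (hf : ContDiff ℝ d f)
    (hg : ContDiff ℝ d g) (a x : EuclideanSpace ℝ (Fin n)) :
    taylorOp d (fun y => f y - g y) a x = taylorOp d f a x - taylorOp d g a x := by
  rw [taylorOp, taylorOp, taylorOp, ← Finset.sum_sub_distrib]
  refine Finset.sum_congr rfl fun k hk => ?_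
  have hkd : (k : WithTop ℕ∞) ≤ d := by exact_mod_cast Nat.lt_succ_iff.mp (Finset.mem_range.mp hk)
  rw [← mul_sub, ← sub_apply,
    ← iteratedFDeriv_sub_apply (hf.of_le hkd).contDiffAt (hg.of_le hkd).contDiffAt]
  rfl

end TaylorOp

/-- for `d' ≤ d`, `f ∈ C^d(ℝⁿ)` and points `a, a' ∈ ℝⁿ`, an additional
lower-order Taylor subtraction about a (possibly different) point `a'` does not change
the order-`d` Taylor remainder about `a`:
`(1 − t^d_a)((1 − t^{d'}_{a'}) f) = (1 − t^d_a) f`. -/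
theorem taylor_remainder_extra_subtraction (n d d' : ℕ) (hdd : d' ≤ d)
    (f : EuclideanSpace ℝ (Fin n) → ℝ) (hf : ContDiff ℝ (d : ℕ∞) f)
    (a a' : EuclideanSpace ℝ (Fin n)) (x : EuclideanSpace ℝ (Fin n)) :
    (f x - taylorOp d' f a' x) -
        taylorOp d (fun y => f y - taylorOp d' f a' y) a x =
      f x - taylorOp d f a x := by
  rw [taylorOp_sub hf (hasFiniteFPowerSeriesOnBall_taylorOp d' f a').contDiff,
    taylorOp_taylorOp_of_le hdd]
  ring
end
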